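/- Gaussian lower bound on perturbed densities: if S has mean 0 and variance at most K, and X = S + Z with Z ~ N(0,τ) independent of S, then the density p of X satisfies p(u) ≥ (2 exp(2K/τ))^{−1} φ_{τ/2}(u) for all u, where φ_{τ/2} is the N(0, τ/2) density. -/

import Mathlib

/-!
Since `(u - s)² ≤ 2u² + 2s²`, the kernel factorises from below:
`φ_τ(u - s) ≥ 2^{-1/2} φ_{τ/2}(u) exp(-s²/τ)`. Integrating in `s` and applying Jensen's inequality
to the convex function `exp` gives `E[exp(-S²/τ)] ≥ exp(-E[S²]/τ) ≥ exp(-K/τ)`; the stated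
constant `(2 exp(2K/τ))⁻¹` is cruder still.
-/

open MeasureTheory Real

/-- The centered Gaussian density with variance `t`. -/
noncomputable def gauss (t x : ℝ) : ℝ :=
  (Real.sqrt (2 * Real.pi * t))⁻¹ * Real.exp (-(x ^ 2) / (2 * t))

lemma gauss_nonneg (t x : ℝ) : 0 ≤ gauss t x := by
  unfold gauss
  positivity

lemma gauss_le {t : ℝ} (ht : 0 ≤ t) (x : ℝ) : gauss t x ≤ (√(2 * π * t))⁻¹ := by
  unfold gauss
  have hexp : exp (-(x ^ 2) / (2 * t)) ≤ 1 :=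
    exp_le_one_iff.2 (div_nonpos_of_nonpos_of_nonneg (by nlinarith) (by positivity))
  exact mul_le_of_le_one_right (by positivity) hexp

lemma integrable_gauss_sub {t : ℝ} (ht : 0 ≤ t) (μ : Measure ℝ) [IsFiniteMeasure μ] (x : ℝ) :
    Integrable (fun s => gauss t (x - s)) μ :=
  Integrable.of_mem_Icc 0 _ (by unfold gauss; fun_prop)
    (ae_of_all _ fun s => ⟨gauss_nonneg _ _, gauss_le ht _⟩)

lemma inv_sqrt_two_mul_gauss_half_mul_exp_le_gauss_sub {t : ℝ} (ht : 0 < t) (x y : ℝ) :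
    (√2)⁻¹ * gauss (t / 2) x * exp (-(y ^ 2) / t) ≤ gauss t (x - y) := by
  have hsqrt : √(2 * π * t) = √2 * √(2 * π * (t / 2)) := by
    rw [← sqrt_mul zero_le_two]
    ring_nf
  have hexponent : -(x ^ 2) / t + -(y ^ 2) / t ≤ -((x - y) ^ 2) / (2 * t) := by
    have hsplit : -((x - y) ^ 2) / (2 * t) =
        -(x ^ 2) / t + -(y ^ 2) / t + (x + y) ^ 2 / (2 * t) := by
      field_simp
      ring
    have : 0 ≤ (x + y) ^ 2 / (2 * t) := by positivity
    linarith
  calc (√2)⁻¹ * gauss (t / 2) x * exp (-(y ^ 2) / t)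
      = (√(2 * π * t))⁻¹ * exp (-(x ^ 2) / t + -(y ^ 2) / t) := by
        rw [gauss, hsqrt, mul_inv, exp_add, show 2 * (t / 2) = t by ring]
        ring
    _ ≤ gauss t (x - y) := by
        unfold gauss
        gcongr

lemma exp_integral_le_integral_exp {α : Type*} [MeasurableSpace α] {μ : Measure α}
    [IsProbabilityMeasure μ] {f : α → ℝ} (hf : Integrable f μ)
    (hexp : Integrable (fun x => exp (f x)) μ) : exp (∫ x, f x ∂μ) ≤ ∫ x, exp (f x) ∂μ :=
  convexOn_exp.map_integral_le continuous_exp.continuousOn isClosed_univ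
    (ae_of_all _ fun _ => Set.mem_univ _) hf hexp

lemma integrable_exp_neg_sq_div (μ : Measure ℝ) [IsFiniteMeasure μ] {t : ℝ} (ht : 0 ≤ t) :
    Integrable (fun s : ℝ => exp (-(s ^ 2) / t)) μ :=
  Integrable.of_mem_Icc 0 1 (by fun_prop) <| ae_of_all _ fun s =>
    ⟨(exp_pos _).le, exp_le_one_iff.2 (div_nonpos_of_nonpos_of_nonneg (by nlinarith) ht)⟩

lemma exp_neg_integral_sq_div_le {μ : Measure ℝ} [IsProbabilityMeasure μ] {t : ℝ} (ht : 0 ≤ t)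
    (hsq : Integrable (fun s => s ^ 2) μ) :
    exp (-(∫ s, s ^ 2 ∂μ) / t) ≤ ∫ s, exp (-(s ^ 2) / t) ∂μ := by
  have hf : Integrable (fun s : ℝ => -(s ^ 2) / t) μ := hsq.neg.div_const t
  simpa only [integral_div, integral_neg] using
    exp_integral_le_integral_exp hf (integrable_exp_neg_sq_div μ ht)

lemma inv_two_mul_exp_two_mul_le {a : ℝ} (ha : 0 ≤ a) :
    (2 * exp (2 * a))⁻¹ ≤ (√2)⁻¹ * exp (-a) := by
  rw [mul_inv, ← exp_neg]
  have hsqrt : √2 ≤ 2 := by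
    rw [sqrt_le_left zero_le_two]
    norm_num
  gcongr
  linarith

theorem stmt6_general (μ : Measure ℝ) [IsProbabilityMeasure μ] (τ K : ℝ) (hτ : 0 < τ)
    (hint2 : Integrable (fun s => s ^ 2) μ)
    (hvar : ∫ s, s ^ 2 ∂μ ≤ K)
    (p : ℝ → ℝ) (hp : ∀ x, p x = ∫ s, gauss τ (x - s) ∂μ) :
    ∀ u, (2 * Real.exp (2 * K / τ))⁻¹ * gauss (τ / 2) u ≤ p u := by
  intro u
  have hK : 0 ≤ K / τ := div_nonneg ((integral_nonneg fun s => sq_nonneg s).trans hvar) hτ.le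
  have hgauss := gauss_nonneg (τ / 2) u
  calc (2 * exp (2 * K / τ))⁻¹ * gauss (τ / 2) u
      ≤ (√2)⁻¹ * exp (-(K / τ)) * gauss (τ / 2) u := by
        rw [mul_div_assoc]
        gcongr
        exact inv_two_mul_exp_two_mul_le hK
    _ ≤ (√2)⁻¹ * gauss (τ / 2) u * exp (-(∫ s, s ^ 2 ∂μ) / τ) := by
        rw [mul_right_comm, neg_div]
        gcongr
    _ ≤ (√2)⁻¹ * gauss (τ / 2) u * ∫ s, exp (-(s ^ 2) / τ) ∂μ := by
        gcongr
        exact exp_neg_integral_sq_div_le hτ.le hint2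
    _ = ∫ s, (√2)⁻¹ * gauss (τ / 2) u * exp (-(s ^ 2) / τ) ∂μ := (integral_const_mul _ _).symm
    _ ≤ ∫ s, gauss τ (u - s) ∂μ :=
        integral_mono ((integrable_exp_neg_sq_div μ hτ.le).const_mul _)
          (integrable_gauss_sub hτ.le μ u)
          fun s => inv_sqrt_two_mul_gauss_half_mul_exp_le_gauss_sub hτ u s
    _ = p u := (hp u).symm

/-- Gaussian lower bound on normally perturbed densities:
`p(u) ≥ (2 exp(2K/τ))⁻¹ φ_{τ/2}(u)`. -/
theorem stmt6 (μ : Measure ℝ) [IsProbabilityMeasure μ] (τ K : ℝ) (hτ : 0 < τ)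
    (hint : Integrable (fun s => s) μ) (hint2 : Integrable (fun s => s ^ 2) μ)
    (hmean : ∫ s, s ∂μ = 0) (hvar : ∫ s, s ^ 2 ∂μ ≤ K)
    (p : ℝ → ℝ) (hp : ∀ x, p x = ∫ s, gauss τ (x - s) ∂μ) :
    ∀ u, (2 * Real.exp (2 * K / τ))⁻¹ * gauss (τ / 2) u ≤ p u :=
  stmt6_general μ τ K hτ hint2 hvar p hp
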